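/- arXiv:1909.06593 — 6 statements merged into one kernel-verified Lean document; each statement's English description precedes it below -/
import Mathlib

section
/- Let A be an m×m and B an n×n real full-rank symmetric matrix, and suppose A has an eigenvalue a and B has an eigenvalue b with a·b > 0. Then there exists a real m×n matrix X such that the symmetric block matrix [[A, X],[Xᵀ, B]] has rank strictly less than m+n. -/
open Matrix

lemma rank_lt_of_mulVec_eq_zero {k : Type*} [Fintype k] [DecidableEq k]
    {M : Matrix k k ℝ} {u : k → ℝ} (hu : u ≠ 0) (h : M.mulVec u = 0) :
    M.rank < Fintype.card k := by
  have hk : M.mulVecLin u = 0 := h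
  have hker : 0 < Module.finrank ℝ (LinearMap.ker M.mulVecLin) := by
    rw [Module.finrank_pos_iff_exists_ne_zero]
    refine ⟨⟨u, hk⟩, fun h => hu ?_⟩
    simpa [Subtype.ext_iff] using h
  have := LinearMap.finrank_range_add_finrank_ker M.mulVecLin
  have hcard : Module.finrank ℝ (k → ℝ) = Fintype.card k := by
    simp [Module.finrank_fintype_fun_eq_card]
  rw [Matrix.rank]
  omega

/-- If the full-rank symmetric matrices `A` and `B` have eigenvalues `a` and `b`
with `a * b > 0`, then some completion `[[A, X], [Xᵀ, B]]` has rank `< m + n`. -/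
theorem block_completion_rank_deficient (m n : ℕ)
    (A : Matrix (Fin m) (Fin m) ℝ) (B : Matrix (Fin n) (Fin n) ℝ)
    (hA : A.IsHermitian) (hB : B.IsHermitian)
    (hAu : IsUnit A) (hBu : IsUnit B)
    (a b : ℝ)
    (ha : ∃ v : Fin m → ℝ, v ≠ 0 ∧ A.mulVec v = a • v)
    (hb : ∃ w : Fin n → ℝ, w ≠ 0 ∧ B.mulVec w = b • w)
    (hab : 0 < a * b) :
    ∃ X : Matrix (Fin m) (Fin n) ℝ, (Matrix.fromBlocks A X Xᵀ B).rank < m + n := by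
  obtain ⟨v, hv, hAv⟩ := ha
  obtain ⟨w, hw, hBw⟩ := hb
  have ha0 : a ≠ 0 := fun h => by simp [h] at hab
  have hv2 : (0:ℝ) < ∑ i, v i * v i := by
    rcases Function.ne_iff.mp hv with ⟨i, hi⟩
    exact Finset.sum_pos' (fun j _ => mul_self_nonneg _)
      ⟨i, Finset.mem_univ i, mul_self_pos.mpr hi⟩
  have hw2 : (0:ℝ) < ∑ j, w j * w j := by
    rcases Function.ne_iff.mp hw with ⟨j, hj⟩
    exact Finset.sum_pos' (fun j _ => mul_self_nonneg _)
      ⟨j, Finset.mem_univ j, mul_self_pos.mpr hj⟩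
  set V := ∑ i, v i * v i with hV
  set W := ∑ j, w j * w j with hW
  set c : ℝ := Real.sqrt (a * b / (V * W)) with hc
  have hc2 : c * c = a * b / (V * W) := Real.mul_self_sqrt (by positivity)
  have hc2' : c * c * (V * W) = a * b := by
    rw [hc2]; field_simp
  set X : Matrix (Fin m) (Fin n) ℝ := Matrix.of fun i j => c * v i * w j with hX
  refine ⟨X, ?_⟩
  set α : ℝ := -(c * W) / a with hα
  set u : Fin m ⊕ Fin n → ℝ := Sum.elim (α • v) w with hu
  have hune : u ≠ 0 := by
    intro h
    apply hw
    funext j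
    have := congrFun h (Sum.inr j)
    simpa [hu] using this
  have hXw : X.mulVec w = (c * W) • v := by
    funext i
    simp only [hX, Matrix.mulVec, dotProduct, Matrix.of_apply, Pi.smul_apply,
      smul_eq_mul]
    have : ∑ j, c * v i * w j * w j = c * v i * ∑ j, w j * w j := by
      rw [Finset.mul_sum]; exact Finset.sum_congr rfl fun j _ => by ring
    rw [this, ← hW]; ring
  have hXtv : Xᵀ.mulVec (α • v) = (α * c * V) • w := by
    funext j
    simp only [hX, Matrix.mulVec, dotProduct, Matrix.transpose_apply,
      Matrix.of_apply, Pi.smul_apply, smul_eq_mul]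
    have : ∑ i, c * v i * w j * (α * v i) = α * c * (∑ i, v i * v i) * w j := by
      rw [Finset.mul_sum, Finset.sum_mul]
      exact Finset.sum_congr rfl fun i _ => by ring
    rw [this, ← hV]
  have key1 : α * a + c * W = 0 := by
    rw [hα, div_mul_cancel₀ _ ha0]; ring
  have key2 : α * c * V + b = 0 := by
    rw [hα]
    field_simp
    linear_combination -hc2'
  have hmul : (Matrix.fromBlocks A X Xᵀ B).mulVec u = 0 := by
    funext k
    cases k with
    | inl i =>
      have h1 : A.mulVec (α • v) = (α * a) • v := by
        rw [Matrix.mulVec_smul, hAv, smul_smul, mul_comm]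
      have heq : (Matrix.fromBlocks A X Xᵀ B).mulVec u (Sum.inl i)
          = A.mulVec (α • v) i + X.mulVec w i := by
        simp [hu, Matrix.fromBlocks_mulVec, Sum.elim_inl]
      rw [heq, h1, hXw]
      simp only [Pi.smul_apply, smul_eq_mul, Pi.zero_apply]
      linear_combination key1 * v i
    | inr j =>
      have heq : (Matrix.fromBlocks A X Xᵀ B).mulVec u (Sum.inr j)
          = Xᵀ.mulVec (α • v) j + B.mulVec w j := by
        simp [hu, Matrix.fromBlocks_mulVec, Sum.elim_inr]
      rw [heq, hXtv, hBw]
      simp only [Pi.smul_apply, smul_eq_mul, Pi.zero_apply]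
      linear_combination key2 * w j
  have := rank_lt_of_mulVec_eq_zero hune hmul
  simpa using this
end

section
/- Let M(t) be the real symmetric n×n matrix depending on a real parameter t as in the one-missing-entry setting (all entries fixed except the (1,n) and (n,1) entries, which equal t). Then the discriminant of the quadratic polynomial t ↦ det(M(t)) equals 4·det(M_{1,1})·det(M_{n,n}), where M_{1,1} and M_{n,n} are the principal submatrices of M(0) obtained by deleting row and column 1, respectively row and column n. -/
open Matrix

/-- The `(n+2) × (n+2)` symmetric matrix equal to `M₀` everywhere except that
the `(1, n)` and `(n, 1)` entries (here the `(0, last)` and `(last, 0)`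
entries) are set to `t`. -/
def cornerMat (n : ℕ) (M₀ : Matrix (Fin (n + 2)) (Fin (n + 2)) ℝ) (t : ℝ) :
    Matrix (Fin (n + 2)) (Fin (n + 2)) ℝ :=
  Matrix.of fun i j =>
    if (i = 0 ∧ j = Fin.last (n + 1)) ∨ (i = Fin.last (n + 1) ∧ j = 0) then t else M₀ i j

namespace DJaux

open Polynomial Equiv

variable {n : ℕ}

/-- Embedding of the inner indices. -/
def inemb (n : ℕ) : Fin n → Fin (n + 2) := fun i => (i.succ.castSucc : Fin (n + 2))

/-- The two boundary indices. -/
def bv (n : ℕ) : Fin 2 → Fin (n + 2) := ![0, Fin.last (n + 1)]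

lemma inemb_injective : Function.Injective (inemb n) := by
  intro a b hab
  have : (a : ℕ) + 1 = (b : ℕ) + 1 := congrArg Fin.val hab
  exact Fin.ext (by omega)

/-- Equivalence sending `inl` to `last`, `inr j` to `castSucc j`. -/
noncomputable def eqG (n : ℕ) : (Fin 1 ⊕ Fin n) ≃ Fin (n + 1) :=
  Equiv.ofBijective (Sum.elim (fun _ => Fin.last n) Fin.castSucc) <| by
    rw [Fintype.bijective_iff_injective_and_card]
    refine ⟨?_, by simp [add_comm]⟩
    rintro (a | a) (b | b) hab <;> simp only [Sum.elim_inl, Sum.elim_inr] at hab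
    · exact congrArg Sum.inl (Subsingleton.elim a b)
    · exfalso
      have h1 := congrArg Fin.val hab
      have h2 := b.isLt
      simp only [Fin.val_last, Fin.coe_castSucc] at h1
      omega
    · exfalso
      have h1 := congrArg Fin.val hab
      have h2 := a.isLt
      simp only [Fin.val_last, Fin.coe_castSucc] at h1
      omega
    · exact congrArg Sum.inr (Fin.castSucc_injective _ hab)

/-- Equivalence sending `inl` to `0`, `inr j` to `succ j`. -/
noncomputable def eqH (n : ℕ) : (Fin 1 ⊕ Fin n) ≃ Fin (n + 1) :=
  Equiv.ofBijective (Sum.elim (fun _ => (0 : Fin (n + 1))) Fin.succ) <| by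
    rw [Fintype.bijective_iff_injective_and_card]
    refine ⟨?_, by simp [add_comm]⟩
    rintro (a | a) (b | b) hab <;> simp only [Sum.elim_inl, Sum.elim_inr] at hab
    · exact congrArg Sum.inl (Subsingleton.elim a b)
    · exact absurd hab.symm (Fin.succ_ne_zero b)
    · exact absurd hab (Fin.succ_ne_zero a)
    · exact congrArg Sum.inr (Fin.succ_injective _ hab)

/-- Equivalence sending `inl` to the boundary, `inr j` to the inner index. -/
noncomputable def eqE (n : ℕ) : (Fin 2 ⊕ Fin n) ≃ Fin (n + 2) :=
  Equiv.ofBijective (Sum.elim (bv n) (inemb n)) <| by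
    rw [Fintype.bijective_iff_injective_and_card]
    refine ⟨?_, by simp [add_comm]⟩
    have hbv : ∀ i : Fin 2, ((bv n i : Fin (n + 2)) : ℕ) = if i = 0 then 0 else n + 1 := by
      intro i
      fin_cases i <;> simp [bv, Fin.last]
    rintro (a | a) (b | b) hab <;> simp only [Sum.elim_inl, Sum.elim_inr] at hab
    · have h1 := congrArg Fin.val hab
      rw [hbv, hbv] at h1
      apply congrArg Sum.inl
      fin_cases a <;> fin_cases b <;> simp_all
    · have h1 := congrArg Fin.val hab
      rw [hbv] at h1
      have := b.isLt
      have h2 : ((inemb n b : Fin (n + 2)) : ℕ) = (b : ℕ) + 1 := rfl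
      rw [h2] at h1
      split_ifs at h1 <;> omega
    · have h1 := congrArg Fin.val hab
      rw [hbv] at h1
      have := a.isLt
      have h2 : ((inemb n a : Fin (n + 2)) : ℕ) = (a : ℕ) + 1 := rfl
      rw [h2] at h1
      split_ifs at h1 <;> omega
    · exact congrArg Sum.inr (inemb_injective hab)

lemma det_submatrix_equivs {I J : Type*} [Fintype I] [Fintype J] [DecidableEq I] [DecidableEq J]
    (B : Matrix J J ℝ) (e f : I ≃ J) :
    det (B.submatrix e f) = (Equiv.Perm.sign (f.trans e.symm) : ℤ) * det B := by
  have h : B.submatrix ⇑e ⇑f = (B.submatrix ⇑e ⇑e).submatrix id ⇑(f.trans e.symm) := by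
    ext i j
    simp [Matrix.submatrix_apply]
  rw [h, Matrix.det_permute', Matrix.det_submatrix_equiv_self]

/-- Desnanot–Jacobi identity, case of invertible inner matrix. -/
lemma keyInv (B : Matrix (Fin (n + 2)) (Fin (n + 2)) ℝ)
    (hS : IsUnit (B.submatrix (inemb n) (inemb n)).det) :
    det (B.submatrix Fin.succ Fin.castSucc) * det (B.submatrix Fin.castSucc Fin.succ)
      + det (B.submatrix (inemb n) (inemb n)) * det B
    = det (B.submatrix Fin.succ Fin.succ) * det (B.submatrix Fin.castSucc Fin.castSucc) := by
  classical
  set S : Matrix (Fin n) (Fin n) ℝ := B.submatrix (inemb n) (inemb n) with hSdef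
  haveI : Invertible S := Matrix.invertibleOfIsUnitDet S hS
  set P : Matrix (Fin 2) (Fin 2) ℝ := Matrix.of fun i j => B (bv n i) (bv n j) with hP
  set Q : Matrix (Fin 2) (Fin n) ℝ := Matrix.of fun i j => B (bv n i) (inemb n j) with hQ
  set R : Matrix (Fin n) (Fin 2) ℝ := Matrix.of fun i j => B (inemb n i) (bv n j) with hR
  set L : Matrix (Fin 2) (Fin 2) ℝ := P - Q * ⅟S * R with hL
  -- determinant of the full matrix
  have hdetB : det B = det S * (L 0 0 * L 1 1 - L 0 1 * L 1 0) := by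
    have h1 : B.submatrix ⇑(eqE n) ⇑(eqE n) = Matrix.fromBlocks P Q R S := by
      ext (i | i) (j | j) <;> rfl
    rw [← Matrix.det_submatrix_equiv_self (eqE n) B, h1, Matrix.det_fromBlocks₂₂, ← hL,
      Matrix.det_fin_two]
  -- generic minor computation
  have minor : ∀ (r c : Fin 1 ⊕ Fin n → Fin (n + 2)) (br bc : Fin 2),
      (∀ j, r (Sum.inr j) = inemb n j) → (∀ j, c (Sum.inr j) = inemb n j) →
      r (Sum.inl 0) = bv n br → c (Sum.inl 0) = bv n bc →
      det (B.submatrix r c) = det S * L br bc := by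
    intro r c br bc hr hc hrb hcb
    have h1 : B.submatrix r c =
        Matrix.fromBlocks (Matrix.of fun _ _ : Fin 1 => B (bv n br) (bv n bc))
          (Matrix.of fun (_ : Fin 1) j => B (bv n br) (inemb n j))
          (Matrix.of fun i (_ : Fin 1) => B (inemb n i) (bv n bc)) S := by
      ext (i | i) (j | j)
      · have hi : i = 0 := Subsingleton.elim _ _
        have hj : j = 0 := Subsingleton.elim _ _
        subst hi hj
        simp [Matrix.submatrix_apply, hrb, hcb, Matrix.fromBlocks]
      · have hi : i = 0 := Subsingleton.elim _ _
        subst hi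
        simp [Matrix.submatrix_apply, hrb, hc, Matrix.fromBlocks]
      · have hj : j = 0 := Subsingleton.elim _ _
        subst hj
        simp [Matrix.submatrix_apply, hr, hcb, Matrix.fromBlocks]
      · simp [Matrix.submatrix_apply, hr, hc, Matrix.fromBlocks, hSdef]
    rw [h1, Matrix.det_fromBlocks₂₂]
    congr 1
    rw [Matrix.det_fin_one]
    simp only [hL, Matrix.sub_apply, Matrix.of_apply, hP, hQ, hR, Matrix.mul_apply,
      Matrix.of_apply]
  -- the four (n+1)-minors
  have hss : det (B.submatrix Fin.succ Fin.succ) = det S * L 1 1 := by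
    rw [← Matrix.det_submatrix_equiv_self (eqG n) (B.submatrix Fin.succ Fin.succ)]
    rw [Matrix.submatrix_submatrix]
    exact minor _ _ 1 1 (fun j => rfl) (fun j => rfl) rfl rfl
  have hcc : det (B.submatrix Fin.castSucc Fin.castSucc) = det S * L 0 0 := by
    rw [← Matrix.det_submatrix_equiv_self (eqH n) (B.submatrix Fin.castSucc Fin.castSucc)]
    rw [Matrix.submatrix_submatrix]
    refine minor _ _ 0 0 (fun j => rfl) (fun j => rfl) ?_ ?_ <;>
      · show Fin.castSucc (0 : Fin (n + 1)) = bv n 0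
        simp [bv]
  -- the two mixed minors, with cancelling signs
  have hsc : det ((B.submatrix Fin.succ Fin.castSucc).submatrix ⇑(eqG n) ⇑(eqH n))
      = det S * L 1 0 := by
    rw [Matrix.submatrix_submatrix]
    refine minor _ _ 1 0 (fun j => rfl) (fun j => rfl) rfl ?_
    show Fin.castSucc (0 : Fin (n + 1)) = bv n 0
    simp [bv]
  have hcs : det ((B.submatrix Fin.castSucc Fin.succ).submatrix ⇑(eqH n) ⇑(eqG n))
      = det S * L 0 1 := by
    rw [Matrix.submatrix_submatrix]
    refine minor _ _ 0 1 (fun j => rfl) (fun j => rfl) ?_ rfl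
    show Fin.castSucc (0 : Fin (n + 1)) = bv n 0
    simp [bv]
  have hsign1 := det_submatrix_equivs (B.submatrix Fin.succ Fin.castSucc) (eqG n) (eqH n)
  have hsign2 := det_submatrix_equivs (B.submatrix Fin.castSucc Fin.succ) (eqH n) (eqG n)
  set s : ℝ := ((Equiv.Perm.sign ((eqH n).trans (eqG n).symm) : ℤ) : ℝ) with hs
  have hsigma : ((Equiv.Perm.sign ((eqG n).trans (eqH n).symm) : ℤ) : ℝ) = s := by
    rw [hs]
    norm_cast
    have : (eqG n).trans (eqH n).symm = ((eqH n).trans (eqG n).symm).symm := by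
      ext x
      simp
    rw [this, Equiv.Perm.sign_symm]
  rw [hsigma] at hsign2
  have hs2 : s * s = 1 := by
    rw [hs]
    norm_cast
    rw [Int.units_mul_self]
    simp
  have hmixed : det (B.submatrix Fin.succ Fin.castSucc)
      * det (B.submatrix Fin.castSucc Fin.succ)
      = (det S * L 1 0) * (det S * L 0 1) := by
    rw [← hsc, ← hcs, hsign1, hsign2]
    ring_nf
    rw [show s ^ 2 = 1 by rw [sq, hs2]]
    ring
  rw [hmixed, hdetB, hss, hcc]
  ring

/-- The inner-diagonal perturbation matrix. -/
def pert (n : ℕ) : Matrix (Fin (n + 2)) (Fin (n + 2)) ℝ :=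
  Matrix.of fun i j => if i = j ∧ i ≠ 0 ∧ i ≠ Fin.last (n + 1) then 1 else 0

lemma pert_submatrix : (pert n).submatrix (inemb n) (inemb n) = 1 := by
  ext i j
  have hval : ((inemb n i : Fin (n + 2)) : ℕ) = (i : ℕ) + 1 := rfl
  have hvalj : ((inemb n j : Fin (n + 2)) : ℕ) = (j : ℕ) + 1 := rfl
  have hlt := i.isLt
  simp only [Matrix.submatrix_apply, pert, Matrix.of_apply, Matrix.one_apply]
  by_cases hij : i = j
  · subst hij
    rw [if_pos rfl, if_pos]
    exact ⟨rfl, by simp [Fin.ext_iff, hval], by simp [Fin.ext_iff, hval, Fin.last]; omega⟩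
  · rw [if_neg hij, if_neg]
    rintro ⟨h, -⟩
    exact hij (inemb_injective h)

/-- Desnanot–Jacobi identity over ℝ. -/
lemma key (B : Matrix (Fin (n + 2)) (Fin (n + 2)) ℝ) :
    det (B.submatrix Fin.succ Fin.castSucc) * det (B.submatrix Fin.castSucc Fin.succ)
      + det (B.submatrix (inemb n) (inemb n)) * det B
    = det (B.submatrix Fin.succ Fin.succ) * det (B.submatrix Fin.castSucc Fin.castSucc) := by
  classical
  set S : Matrix (Fin n) (Fin n) ℝ := B.submatrix (inemb n) (inemb n) with hSdef
  set Bp : Matrix (Fin (n + 2)) (Fin (n + 2)) ℝ[X] :=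
    B.map Polynomial.C + (Polynomial.X : ℝ[X]) • (pert n).map Polynomial.C with hBp
  have hmap : ∀ t : ℝ, Bp.map (Polynomial.eval t) = B + t • pert n := by
    intro t
    ext i j
    simp only [hBp, Matrix.map_apply, Matrix.add_apply, Matrix.smul_apply, smul_eq_mul,
      Polynomial.eval_add, Polynomial.eval_mul, Polynomial.eval_C, Polynomial.eval_X]
  have hSt : ∀ t : ℝ, (B + t • pert n).submatrix (inemb n) (inemb n) = S + t • 1 := by
    intro t
    have : (B + t • pert n).submatrix (inemb n) (inemb n)
        = B.submatrix (inemb n) (inemb n) + t • (pert n).submatrix (inemb n) (inemb n) := by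
      ext i j
      simp [Matrix.submatrix_apply, Matrix.add_apply, Matrix.smul_apply]
    rw [this, pert_submatrix, hSdef]
  -- the characteristic polynomial of -S controls invertibility
  set pS : ℝ[X] := Matrix.charpoly (-S) with hpS
  have hevalpS : ∀ t : ℝ, Polynomial.eval t pS
      = ((B + t • pert n).submatrix (inemb n) (inemb n)).det := by
    intro t
    rw [hSt t, hpS, Matrix.charpoly]
    rw [show Polynomial.eval t (Matrix.charmatrix (-S)).det
        = ((Matrix.charmatrix (-S)).map (Polynomial.evalRingHom t)).det from
      (Polynomial.evalRingHom t).map_det _]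
    congr 1
    ext i j
    by_cases hij : i = j
    · subst hij
      simp [Matrix.charmatrix_apply_eq, Matrix.add_apply, Matrix.smul_apply, Matrix.one_apply]
      ring
    · simp [Matrix.charmatrix_apply_ne _ _ _ hij, Matrix.add_apply, Matrix.smul_apply,
        Matrix.one_apply, hij]
  have hpSne : pS ≠ 0 := (Matrix.charpoly_monic _).ne_zero
  -- both sides as polynomials
  set lhs : ℝ[X] := det (Bp.submatrix Fin.succ Fin.castSucc)
      * det (Bp.submatrix Fin.castSucc Fin.succ)
      + det (Bp.submatrix (inemb n) (inemb n)) * det Bp with hlhs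
  set rhs : ℝ[X] := det (Bp.submatrix Fin.succ Fin.succ)
      * det (Bp.submatrix Fin.castSucc Fin.castSucc) with hrhs
  have heval : ∀ (t : ℝ) (r c : Fin (n + 1) → Fin (n + 2)),
      Polynomial.eval t (det (Bp.submatrix r c)) = det ((B + t • pert n).submatrix r c) := by
    intro t r c
    have h1 : Polynomial.eval t (det (Bp.submatrix r c))
        = ((Bp.submatrix r c).map (Polynomial.eval t)).det :=
      (Polynomial.evalRingHom t).map_det _
    rw [h1, ← Matrix.submatrix_map, hmap t]
  have heval' : ∀ (t : ℝ) (r c : Fin n → Fin (n + 2)),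
      Polynomial.eval t (det (Bp.submatrix r c)) = det ((B + t • pert n).submatrix r c) := by
    intro t r c
    have h1 : Polynomial.eval t (det (Bp.submatrix r c))
        = ((Bp.submatrix r c).map (Polynomial.eval t)).det :=
      (Polynomial.evalRingHom t).map_det _
    rw [h1, ← Matrix.submatrix_map, hmap t]
  have hevalB : ∀ t : ℝ, Polynomial.eval t (det Bp) = det (B + t • pert n) := by
    intro t
    have h1 : Polynomial.eval t (det Bp) = (Bp.map (Polynomial.eval t)).det :=
      (Polynomial.evalRingHom t).map_det _
    rw [h1, hmap t]
  have hagree : {t : ℝ | Polynomial.eval t pS ≠ 0}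
      ⊆ {t : ℝ | Polynomial.eval t lhs = Polynomial.eval t rhs} := by
    intro t ht
    have hunit : IsUnit ((B + t • pert n).submatrix (inemb n) (inemb n)).det := by
      rw [← hevalpS t]
      exact isUnit_iff_ne_zero.mpr ht
    have := keyInv (B + t • pert n) hunit
    simp only [Set.mem_setOf_eq, hlhs, hrhs, Polynomial.eval_add, Polynomial.eval_mul,
      heval t, heval' t, hevalB t]
    exact this
  have hinf : Set.Infinite {t : ℝ | Polynomial.eval t lhs = Polynomial.eval t rhs} := by
    apply Set.Infinite.mono hagree
    have : {t : ℝ | Polynomial.eval t pS ≠ 0} = {t : ℝ | Polynomial.IsRoot pS t}ᶜ := by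
      ext t
      simp [Polynomial.IsRoot]
    rw [this]
    exact (Polynomial.finite_setOf_isRoot hpSne).infinite_compl
  have hpoly : lhs = rhs := Polynomial.eq_of_infinite_eval_eq lhs rhs hinf
  have h0 := congrArg (Polynomial.eval (0 : ℝ)) hpoly
  simp only [hlhs, hrhs, Polynomial.eval_add, Polynomial.eval_mul,
    heval (0 : ℝ), heval' (0 : ℝ), hevalB (0 : ℝ)] at h0
  simpa using h0

end DJaux

/-- The discriminant of the quadratic `t ↦ det M(t)`, namely
`4 det(M(0)_{1,n})² + 4 det(M_{1n,1n}) det(M(0))`, equals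
`4 det(M_{1,1}) det(M_{n,n})`. -/
theorem discriminant_det_corner (n : ℕ) (M₀ : Matrix (Fin (n + 2)) (Fin (n + 2)) ℝ)
    (hM : M₀.IsSymm) :
    4 * ((cornerMat n M₀ 0).submatrix Fin.succ Fin.castSucc).det ^ 2
      + 4 * ((cornerMat n M₀ 0).submatrix
            (fun i : Fin n => (i.succ.castSucc : Fin (n + 2)))
            (fun j : Fin n => (j.succ.castSucc : Fin (n + 2)))).det
          * (cornerMat n M₀ 0).det =
    4 * ((cornerMat n M₀ 0).submatrix Fin.succ Fin.succ).det
      * ((cornerMat n M₀ 0).submatrix Fin.castSucc Fin.castSucc).det := by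
  classical
  set M := cornerMat n M₀ 0 with hMdef
  have hsymm : ∀ i j, M j i = M i j := by
    intro i j
    have hM' : M₀ j i = M₀ i j := congrFun (congrFun hM i) j
    simp only [hMdef, cornerMat, Matrix.of_apply]
    by_cases h : (i = 0 ∧ j = Fin.last (n + 1)) ∨ (i = Fin.last (n + 1) ∧ j = 0)
    · rw [if_pos h, if_pos (by tauto)]
    · rw [if_neg h, if_neg (by tauto), hM']
  have hdet : (M.submatrix Fin.succ Fin.castSucc).det
      = (M.submatrix Fin.castSucc Fin.succ).det := by
    rw [← Matrix.det_transpose]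
    congr 1
    ext i j
    simp only [Matrix.transpose_apply, Matrix.submatrix_apply]
    exact hsymm (Fin.castSucc i) (Fin.succ j)
  have hkey := DJaux.key (n := n) M
  have hinemb : (fun i : Fin n => (i.succ.castSucc : Fin (n + 2))) = DJaux.inemb n := rfl
  rw [hinemb]
  linear_combination (4 : ℝ) * hkey
    + 4 * (M.submatrix Fin.succ Fin.castSucc).det * hdet
end

section
/- Let n ≥ 2 and let M(t) be the real symmetric n×n matrix with all entries fixed except the (1,n) and (n,1) entries, which equal t. Suppose det(M_{1n,1n}) ≠ 0 (for n = 2 interpret this condition as vacuous). Then there exists a real t with det(M(t)) = 0 if and only if det(M_{1,1})·det(M_{n,n}) ≥ 0. -/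
/-!
List the indices as the middle block `N = M_{1n,1n}` followed by the two corners. The Schur
complement `S` of `N` in `M(0)` is a symmetric `2 × 2` matrix, and replacing `M(0)` by `M(t)` only
adds `t` to its off-diagonal entries, so
`det M(t) = det N · (S₀₀ S₁₁ - (S₀₁ + t)²)`, `det M_{n,n} = det N · S₀₀` and
`det M_{1,1} = det N · S₁₁`. Hence `det M(t)` has a real root iff `S₀₀ S₁₁ ≥ 0`, that is, iff
`det M_{1,1} · det M_{n,n} = (det N)² S₀₀ S₁₁ ≥ 0`.
-/

open Matrix

namespace Matrix

variable {m n o α : Type*}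

theorem toBlocks₁₁_add_fromBlocks_zero [AddZeroClass α] (M : Matrix (m ⊕ n) (m ⊕ n) α)
    (E : Matrix n n α) : (M + fromBlocks 0 0 0 E).toBlocks₁₁ = M.toBlocks₁₁ := by
  ext i j
  simp [toBlocks₁₁]

variable [Fintype m] [DecidableEq m] [CommRing α]

noncomputable def schurCompl (M : Matrix (m ⊕ n) (m ⊕ n) α) : Matrix n n α :=
  M.toBlocks₂₂ - M.toBlocks₂₁ * M.toBlocks₁₁⁻¹ * M.toBlocks₁₂

theorem det_eq_det_toBlocks₁₁_mul_det_schurCompl [Fintype n] [DecidableEq n]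
    (M : Matrix (m ⊕ n) (m ⊕ n) α) (h : IsUnit M.toBlocks₁₁.det) :
    M.det = M.toBlocks₁₁.det * M.schurCompl.det := by
  have := M.toBlocks₁₁.invertibleOfIsUnitDet h
  conv_lhs => rw [← fromBlocks_toBlocks M]
  rw [det_fromBlocks₁₁, invOf_eq_nonsing_inv, schurCompl]

theorem schurCompl_submatrix_sumMap (M : Matrix (m ⊕ n) (m ⊕ n) α) (f : o → n) :
    (M.submatrix (Sum.map id f) (Sum.map id f)).schurCompl = M.schurCompl.submatrix f f := by
  ext i j
  simp [schurCompl, toBlocks₁₁, toBlocks₁₂, toBlocks₂₁, toBlocks₂₂, mul_apply]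

theorem schurCompl_add_fromBlocks_zero (M : Matrix (m ⊕ n) (m ⊕ n) α) (E : Matrix n n α) :
    (M + fromBlocks 0 0 0 E).schurCompl = M.schurCompl + E := by
  ext i j
  simp only [schurCompl, toBlocks₁₁, toBlocks₁₂, toBlocks₂₁, toBlocks₂₂, add_apply, sub_apply,
    mul_apply, of_apply, fromBlocks_apply₁₁, fromBlocks_apply₁₂, fromBlocks_apply₂₁,
    fromBlocks_apply₂₂, zero_apply, add_zero]
  ring

theorem IsSymm.schurCompl {M : Matrix (m ⊕ n) (m ⊕ n) α} (hM : M.IsSymm) :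
    M.schurCompl.IsSymm := by
  rw [← fromBlocks_toBlocks M, isSymm_fromBlocks_iff] at hM
  obtain ⟨h₁₁, h₁₂, -, h₂₂⟩ := hM
  simp only [IsSymm, Matrix.schurCompl, transpose_sub, transpose_mul, transpose_nonsing_inv,
    h₁₁.eq, h₂₂.eq, ← h₁₂, transpose_transpose, Matrix.mul_assoc]

theorem det_submatrix_sumMap_id [Fintype n] [DecidableEq n] [Fintype o] [DecidableEq o]
    (M : Matrix (m ⊕ n) (m ⊕ n) α) (h : IsUnit M.toBlocks₁₁.det) (f : o → n) :
    (M.submatrix (Sum.map id f) (Sum.map id f)).det =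
      M.toBlocks₁₁.det * (M.schurCompl.submatrix f f).det := by
  rw [det_eq_det_toBlocks₁₁_mul_det_schurCompl (M.submatrix (Sum.map id f) (Sum.map id f)) h,
    schurCompl_submatrix_sumMap]
  rfl

end Matrix

theorem det_add_antidiag {S : Matrix (Fin 2) (Fin 2) ℝ} (hS : S.IsSymm) (t : ℝ) :
    (S + !![0, t; t, 0]).det = S 0 0 * S 1 1 - (S 0 1 + t) ^ 2 := by
  simp only [det_fin_two, Matrix.add_apply, of_apply, cons_val', cons_val_zero, cons_val_one,
    cons_val_fin_one, add_zero, hS.apply 0 1]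
  ring

theorem exists_det_add_antidiag_eq_zero_iff {S : Matrix (Fin 2) (Fin 2) ℝ} (hS : S.IsSymm) :
    (∃ t : ℝ, (S + !![0, t; t, 0]).det = 0) ↔ 0 ≤ S 0 0 * S 1 1 := by
  simp_rw [det_add_antidiag hS, sub_eq_zero]
  refine ⟨fun ⟨t, ht⟩ => ht ▸ sq_nonneg _, fun h => ⟨√(S 0 0 * S 1 1) - S 0 1, ?_⟩⟩
  rw [add_sub_cancel, Real.sq_sqrt h]

def cornerEquiv (n : ℕ) : Fin n ⊕ Fin 2 ≃ Fin (n + 2) where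
  toFun := Sum.elim (fun i => i.succ.castSucc) ![0, Fin.last (n + 1)]
  invFun := Fin.cases (.inr 0) (Fin.lastCases (.inr 1) .inl)
  left_inv := by
    rintro (i | k)
    · simp
    · fin_cases k
      · simp
      · simp [← Fin.succ_last]
  right_inv j := by
    induction j using Fin.cases with
    | zero => simp
    | succ j =>
      induction j using Fin.lastCases with
      | last => simp [← Fin.succ_last]
      | cast i => simp

section Corner

variable {n : ℕ} {M₀ : Matrix (Fin (n + 2)) (Fin (n + 2)) ℝ}

variable (n M₀) in
def cornerBlocks : Matrix (Fin n ⊕ Fin 2) (Fin n ⊕ Fin 2) ℝ :=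
  (cornerMat n M₀ 0).submatrix (cornerEquiv n) (cornerEquiv n)

theorem isSymm_cornerMat (hM : M₀.IsSymm) (t : ℝ) : (cornerMat n M₀ t).IsSymm := by
  ext i j
  simp only [cornerMat, transpose_apply, of_apply, hM.apply i j]
  exact if_congr (by tauto) rfl rfl

theorem cornerMat_submatrix_cornerEquiv (t : ℝ) :
    (cornerMat n M₀ t).submatrix (cornerEquiv n) (cornerEquiv n) =
      cornerBlocks n M₀ + fromBlocks 0 0 0 !![0, t; t, 0] := by
  ext (i | k) (j | l)
  · simp [cornerBlocks, cornerEquiv, cornerMat]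
  · fin_cases l <;> simp [cornerBlocks, cornerEquiv, cornerMat]
  · fin_cases k <;> simp [cornerBlocks, cornerEquiv, cornerMat]
  · fin_cases k <;> fin_cases l <;> simp [cornerBlocks, cornerEquiv, cornerMat]

theorem det_cornerMat (h : IsUnit (cornerBlocks n M₀).toBlocks₁₁.det) (t : ℝ) :
    (cornerMat n M₀ t).det = (cornerBlocks n M₀).toBlocks₁₁.det *
      ((cornerBlocks n M₀).schurCompl + !![0, t; t, 0]).det := by
  rw [← det_submatrix_equiv_self (cornerEquiv n), cornerMat_submatrix_cornerEquiv,
    det_eq_det_toBlocks₁₁_mul_det_schurCompl _ (by rwa [toBlocks₁₁_add_fromBlocks_zero]),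
    toBlocks₁₁_add_fromBlocks_zero, schurCompl_add_fromBlocks_zero]

theorem det_cornerMat_submatrix_succ (h : IsUnit (cornerBlocks n M₀).toBlocks₁₁.det) :
    ((cornerMat n M₀ 0).submatrix Fin.succ Fin.succ).det =
      (cornerBlocks n M₀).toBlocks₁₁.det * (cornerBlocks n M₀).schurCompl 1 1 := by
  have hσ : Fin.succ ∘ (finSumFinEquiv : Fin n ⊕ Fin 1 ≃ Fin (n + 1)) =
      cornerEquiv n ∘ Sum.map id (fun _ => 1) := by
    ext (i | k) : 1 <;> simp [cornerEquiv, Fin.ext_iff]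
  rw [← det_submatrix_equiv_self finSumFinEquiv, submatrix_submatrix, hσ,
    ← submatrix_submatrix, ← cornerBlocks, det_submatrix_sumMap_id _ h, det_fin_one]
  rfl

theorem det_cornerMat_submatrix_castSucc (h : IsUnit (cornerBlocks n M₀).toBlocks₁₁.det) :
    ((cornerMat n M₀ 0).submatrix Fin.castSucc Fin.castSucc).det =
      (cornerBlocks n M₀).toBlocks₁₁.det * (cornerBlocks n M₀).schurCompl 0 0 := by
  -- `σ (inl i) = i.succ` and `σ (inr 0) = 0`
  let σ : Fin n ⊕ Fin 1 ≃ Fin (n + 1) :=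
    (Equiv.sumComm _ _).trans (finSumFinEquiv.trans (finCongr (Nat.add_comm 1 n)))
  have hσ : Fin.castSucc ∘ σ = cornerEquiv n ∘ Sum.map id (fun _ => 0) := by
    ext (i | k) : 1 <;> simp [σ, cornerEquiv, Fin.ext_iff, add_comm]
  rw [← det_submatrix_equiv_self σ, submatrix_submatrix, hσ, ← submatrix_submatrix,
    ← cornerBlocks, det_submatrix_sumMap_id _ h, det_fin_one]
  rfl

end Corner

/-- If `det(M_{1n,1n}) ≠ 0`, then `det M(t) = 0` for some real `t` if and only
if `det(M_{1,1}) · det(M_{n,n}) ≥ 0`. -/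
theorem exists_root_det_corner_of_ne_zero (n : ℕ)
    (M₀ : Matrix (Fin (n + 2)) (Fin (n + 2)) ℝ) (hM : M₀.IsSymm)
    (hmid : ((cornerMat n M₀ 0).submatrix
        (fun i : Fin n => (i.succ.castSucc : Fin (n + 2)))
        (fun j : Fin n => (j.succ.castSucc : Fin (n + 2)))).det ≠ 0) :
    (∃ t : ℝ, (cornerMat n M₀ t).det = 0) ↔
      0 ≤ ((cornerMat n M₀ 0).submatrix Fin.succ Fin.succ).det
        * ((cornerMat n M₀ 0).submatrix Fin.castSucc Fin.castSucc).det := by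
  have hd : (cornerBlocks n M₀).toBlocks₁₁.det ≠ 0 := hmid
  have hS : (cornerBlocks n M₀).schurCompl.IsSymm :=
    ((isSymm_cornerMat hM 0).submatrix _).schurCompl
  simp_rw [det_cornerMat hd.isUnit, det_cornerMat_submatrix_succ hd.isUnit,
    det_cornerMat_submatrix_castSucc hd.isUnit, mul_eq_zero, hd, false_or,
    exists_det_add_antidiag_eq_zero_iff hS]
  set d := (cornerBlocks n M₀).toBlocks₁₁.det
  set S := (cornerBlocks n M₀).schurCompl
  rw [show d * S 1 1 * (d * S 0 0) = d ^ 2 * (S 0 0 * S 1 1) by ring]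
  exact (mul_nonneg_iff_of_pos_left (by positivity)).symm
end

section
/- Let M(x) be the n×n symmetric matrix over ℝ whose diagonal entries and all off-diagonal entries except those in positions {i,j} for {i,j} ranging over the edge set of an odd cycle on a subset of [n] are fixed real numbers, while the entries corresponding to the odd-cycle edges are variables. Then the determinant of M(x), as a polynomial in the variable entries, has odd total degree; consequently, there is a real choice of the variable entries making M singular. -/
/-!
Each term of the Leibniz expansion of `det (cycMat n m c F)` takes one entry from every column,
and only the columns `c j` contain variables, so the determinant has total degree at most
`2m+3`. A term reaches this degree only if its permutation sends every cycle vertex to a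
neighbour; on an odd cycle (which has no perfect matching) this forces the permutation to rotate
the whole cycle one step forward or one step backward. Both rotations are even and contribute
`x₀ ⋯ x_{2m+2}` times the complementary principal minor, so the top homogeneous component of the
determinant is `2 · det(minor) · x₀ ⋯ x_{2m+2} ≠ 0` and the total degree is exactly `2m+3`.

A real polynomial `P` of odd total degree `d` has a zero: choose `v` on which the degree-`d`
component of `P` does not vanish; then `t ↦ P(t v)` is a univariate polynomial of odd degree `d`.
-/

open Matrix

-- The symmetric `n × n` matrix of polynomials whose entries are fixed reals
-- (from `F`) except at the positions of the edges of the odd cycle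
-- `c 0 — c 1 — ⋯ — c (2m+2) — c 0`, with the variables `X i` placed symmetrically.
open Classical in
noncomputable def cycMat (n m : ℕ) (c : Fin (2 * m + 3) → Fin n)
    (F : Matrix (Fin n) (Fin n) ℝ) :
    Matrix (Fin n) (Fin n) (MvPolynomial (Fin (2 * m + 3)) ℝ) :=
  Matrix.of fun p q =>
    if h : ∃ i : Fin (2 * m + 3), (p = c i ∧ q = c (i + 1)) ∨ (p = c (i + 1) ∧ q = c i)
    then MvPolynomial.X h.choose
    else MvPolynomial.C (F p q)

open Filter

theorem tendsto_pow_atBot_atBot_of_odd {n : ℕ} (hn : Odd n) :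
    Tendsto (fun x : ℝ => x ^ n) atBot atBot := by
  have h := (tendsto_pow_atTop (α := ℝ) hn.pos.ne').comp tendsto_neg_atBot_atTop
  refine (tendsto_neg_atTop_atBot.comp h).congr fun x => ?_
  simp [hn.neg_pow]

namespace Polynomial

theorem exists_isRoot_of_odd_natDegree_of_leadingCoeff_pos {P : ℝ[X]} (hP : Odd P.natDegree)
    (hlc : 0 < P.leadingCoeff) : ∃ x, P.IsRoot x := by
  have hdeg : 0 < P.degree := natDegree_pos_iff_degree_pos.mp hP.pos
  have htop := P.tendsto_atTop_of_leadingCoeff_nonneg hdeg hlc.le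
  have hbot : Tendsto (fun x => P.eval x) atBot atBot :=
    P.isEquivalent_atBot_lead.symm.tendsto_atBot
      ((tendsto_pow_atBot_atBot_of_odd hP).const_mul_atBot hlc)
  exact P.continuous.surjective htop hbot 0

theorem exists_isRoot_of_odd_natDegree {P : ℝ[X]} (hP : Odd P.natDegree) : ∃ x, P.IsRoot x := by
  have hlc : P.leadingCoeff ≠ 0 := leadingCoeff_ne_zero.mpr (ne_zero_of_natDegree_gt hP.pos)
  rcases hlc.lt_or_gt with hneg | hpos
  · obtain ⟨x, hx⟩ := exists_isRoot_of_odd_natDegree_of_leadingCoeff_pos (P := -P)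
      (by rwa [natDegree_neg]) (by simpa using hneg)
    exact ⟨x, by simpa using hx⟩
  · exact exists_isRoot_of_odd_natDegree_of_leadingCoeff_pos hP hpos

end Polynomial

namespace MvPolynomial

variable {σ R : Type*} [CommSemiring R]

theorem aeval_C_mul_X_monomial (v : σ → R) (s : σ →₀ ℕ) (a : R) :
    aeval (fun i => Polynomial.C (v i) * Polynomial.X) (monomial s a) =
      Polynomial.C (eval v (monomial s a)) * Polynomial.X ^ s.degree := by
  simp only [aeval_monomial, eval_monomial, Finsupp.prod, mul_pow, Finset.prod_mul_distrib,
    Finset.prod_pow_eq_pow_sum, Finsupp.degree_apply, map_mul, map_prod, map_pow,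
    Polynomial.algebraMap_eq, mul_assoc]

theorem coeff_aeval_C_mul_X (v : σ → R) (P : MvPolynomial σ R) (k : ℕ) :
    (aeval (fun i => Polynomial.C (v i) * Polynomial.X) P).coeff k =
      eval v (homogeneousComponent k P) := by
  induction P using MvPolynomial.induction_on' with
  | monomial s a =>
    rw [homogeneousComponent_of_mem (isHomogeneous_monomial a rfl), aeval_C_mul_X_monomial,
      Polynomial.coeff_C_mul_X_pow]
    split_ifs <;> simp
  | add p q hp hq => simp [hp, hq]

theorem homogeneousComponent_totalDegree_ne_zero {P : MvPolynomial σ R} (hP : P ≠ 0) :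
    homogeneousComponent P.totalDegree P ≠ 0 := by
  obtain ⟨s, hs, hsd⟩ := P.support.exists_mem_eq_sup (support_nonempty.mpr hP) Finsupp.degree
  intro h
  have hcoeff := congrArg (coeff s) h
  rw [coeff_homogeneousComponent, if_pos (by rw [← hsd]; rfl), coeff_zero] at hcoeff
  exact mem_support_iff.mp hs hcoeff

theorem exists_eval_eq_zero_of_odd_totalDegree {P : MvPolynomial σ ℝ} (hP : Odd P.totalDegree) :
    ∃ x, eval x P = 0 := by
  have hP0 : P ≠ 0 := by rintro rfl; simp at hP
  obtain ⟨v, hv⟩ : ∃ v, eval v (homogeneousComponent P.totalDegree P) ≠ 0 := by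
    by_contra! h
    exact homogeneousComponent_totalDegree_ne_zero hP0 (funext fun x => by simp [h x])
  set q := aeval (fun i => Polynomial.C (v i) * Polynomial.X) P
  have hq : q.natDegree = P.totalDegree := by
    refine le_antisymm (Polynomial.natDegree_le_iff_coeff_eq_zero.mpr fun k hk => ?_)
      (Polynomial.le_natDegree_of_ne_zero (by rwa [coeff_aeval_C_mul_X]))
    rw [coeff_aeval_C_mul_X, homogeneousComponent_eq_zero _ _ (by exact_mod_cast hk), map_zero]
  obtain ⟨t, ht⟩ := Polynomial.exists_isRoot_of_odd_natDegree (hq ▸ hP)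
  refine ⟨fun i => v i * t, ?_⟩
  have h := comp_aeval_apply (R := ℝ) (fun i => Polynomial.C (v i) * Polynomial.X)
    (Polynomial.aeval t) P
  simp only [map_mul, Polynomial.aeval_C, Polynomial.aeval_X, Algebra.algebraMap_self,
    RingHom.id_apply] at h
  calc eval (fun i => v i * t) P = Polynomial.aeval t q := by rw [h]; rfl
    _ = 0 := ht

end MvPolynomial

open Finset Equiv

section PermSum

variable {α R : Type*} [Fintype α] [DecidableEq α] [CommRing R]

theorem Matrix.sum_perm_fixing_eq_det_submatrix (S : Finset α) (F : Matrix α α R) :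
    ∑ τ ∈ univ.filter (fun τ : Perm α => ∀ a ∈ S, τ a = a),
        ((Perm.sign τ : ℤ) : R) * ∏ a ∈ Sᶜ, F (τ a) a =
      (F.submatrix (Subtype.val : {a // a ∉ S} → α) Subtype.val).det := by
  rw [Finset.sum_subtype (p := fun τ : Perm α => ∀ a, ¬ a ∉ S → τ a = a) _ (by simp),
    det_apply', ← (Perm.subtypeEquivSubtypePerm (· ∉ S)).sum_comp]
  refine Fintype.sum_congr _ _ fun τ => ?_
  rw [Finset.prod_subtype Sᶜ (fun _ => mem_compl)]
  congr 1
  · exact congrArg (fun s : ℤˣ => ((s : ℤ) : R)) (Perm.sign_ofSubtype τ)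
  · exact Fintype.prod_congr _ _ fun a => by
      rw [Perm.subtypeEquivSubtypePerm_apply_of_mem τ a.2]; rfl

theorem Matrix.sum_perm_eqOn_eq_sign_mul_det_submatrix (S : Finset α) (ρ : Perm α)
    [DecidablePred fun σ : Perm α => ∀ a ∈ S, σ a = ρ a] (hρ : ∀ a ∉ S, ρ a = a)
    (F : Matrix α α R) :
    ∑ σ ∈ univ.filter (fun σ : Perm α => ∀ a ∈ S, σ a = ρ a),
        ((Perm.sign σ : ℤ) : R) * ∏ a ∈ Sᶜ, F (σ a) a =
      (Perm.sign ρ : ℤ) *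
        (F.submatrix (Subtype.val : {a // a ∉ S} → α) Subtype.val).det := by
  rw [← sum_perm_fixing_eq_det_submatrix, Finset.mul_sum]
  refine (Finset.sum_equiv (Equiv.mulLeft ρ) (fun τ => by simp) fun τ hτ => ?_).symm
  have hτS : ∀ a ∉ S, τ a ∉ S := fun a ha hτa =>
    ha (τ.injective ((mem_filter.mp hτ).2 _ hτa) ▸ hτa)
  simp only [coe_mulLeft, Perm.sign_mul, Units.val_mul, Int.cast_mul, Perm.mul_apply, mul_assoc]
  congr 2
  exact Finset.prod_congr rfl fun a ha => by rw [hρ _ (hτS a (mem_compl.mp ha))]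

end PermSum

open scoped Fin.CommRing

section OddCycle

variable {m : ℕ}

theorem Fin.two_ne_zero_of_odd : (2 : Fin (2 * m + 3)) ≠ 0 := by
  simp [Fin.ext_iff, Nat.mod_eq_of_lt (show 2 < 2 * m + 3 by omega)]

theorem Fin.two_mul_add_two_eq_one : (2 : Fin (2 * m + 3)) * ((m : Fin (2 * m + 3)) + 2) = 1 := by
  have h : ((2 * m + 3 : ℕ) : Fin (2 * m + 3)) = 0 := Fin.natCast_self _
  push_cast at h
  linear_combination h

variable {α : Type*} {c : Fin (2 * m + 3) → α}

def CycleAdj (c : Fin (2 * m + 3) → α) (p q : α) : Prop :=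
  ∃ i : Fin (2 * m + 3), (p = c i ∧ q = c (i + 1)) ∨ (p = c (i + 1) ∧ q = c i)

theorem CycleAdj.right_mem_image [DecidableEq α] {p q : α} (h : CycleAdj c p q) :
    q ∈ univ.image c := by
  obtain ⟨i, ⟨-, rfl⟩ | ⟨-, rfl⟩⟩ := h <;> exact mem_image_of_mem c (mem_univ _)

theorem CycleAdj.eq_add_one_or_eq_sub_one (hc : Function.Injective c) {p : α}
    {j : Fin (2 * m + 3)} (h : CycleAdj c p (c j)) : p = c (j + 1) ∨ p = c (j - 1) := by
  obtain ⟨i, ⟨rfl, hj⟩ | ⟨rfl, hj⟩⟩ := h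
  · right; rw [hc hj, add_sub_cancel_right]
  · left; rw [hc hj]

theorem eq_of_cycle_edge (hc : Function.Injective c) {i j : Fin (2 * m + 3)}
    (h : (c i = c j ∧ c (i + 1) = c (j + 1)) ∨ (c i = c (j + 1) ∧ c (i + 1) = c j)) :
    i = j := by
  rcases h with ⟨h, -⟩ | ⟨h₁, h₂⟩
  · exact hc h
  · have h₁ := hc h₁
    have h₂ := hc h₂
    exact absurd (by linear_combination h₂ - h₁) Fin.two_ne_zero_of_odd

theorem forall_eq_add_one_or_forall_eq_sub_one (hc : Function.Injective c) {σ : Perm α}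
    (h : ∀ j, σ (c j) = c (j + 1) ∨ σ (c j) = c (j - 1)) :
    (∀ j, σ (c j) = c (j + 1)) ∨ (∀ j, σ (c j) = c (j - 1)) := by
  by_cases hS : ∃ j₀, σ (c j₀) = c (j₀ + 1)
  · obtain ⟨j₀, hj₀⟩ := hS
    left
    -- `σ (c (j + 2)) = c (j + 1)` would collide with `σ (c j)`, and `2` generates `Fin (2m+3)`
    have step : ∀ j, σ (c j) = c (j + 1) → σ (c (j + 2)) = c (j + 2 + 1) := by
      intro j hj
      refine (h (j + 2)).resolve_right fun h' => Fin.two_ne_zero_of_odd (m := m) ?_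
      have : j + 2 = j := hc (σ.injective (by rw [h', hj]; ring_nf))
      linear_combination this
    have orbit : ∀ t : ℕ, σ (c (j₀ + 2 * t)) = c (j₀ + 2 * t + 1) := by
      intro t
      induction t with
      | zero => simpa using hj₀
      | succ t ih => simpa [mul_add, add_assoc] using step _ ih
    intro j
    have := orbit ((m + 2 : Fin (2 * m + 3)) * (j - j₀)).val
    rwa [Fin.cast_val_eq_self, ← mul_assoc, Fin.two_mul_add_two_eq_one, one_mul,
      add_sub_cancel] at this
  · exact Or.inr fun j => (h j).resolve_left (not_exists.mp hS j)

section Rotation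

variable [DecidableEq α]

def cycleRotation (c : Fin (2 * m + 3) → α) (hc : Function.Injective c) : Perm α :=
  (finRotate (2 * m + 3)).viaFintypeEmbedding ⟨c, hc⟩

variable (hc : Function.Injective c)

theorem cycleRotation_apply (j : Fin (2 * m + 3)) : cycleRotation c hc (c j) = c (j + 1) :=
  (Perm.viaFintypeEmbedding_apply_image _ ⟨c, hc⟩ j).trans (congrArg c (finRotate_apply j))

theorem cycleRotation_symm_apply (j : Fin (2 * m + 3)) :
    (cycleRotation c hc).symm (c j) = c (j - 1) := by
  rw [symm_apply_eq, cycleRotation_apply, sub_add_cancel]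

theorem cycleRotation_apply_of_notMem {p : α} (hp : p ∉ univ.image c) :
    cycleRotation c hc p = p :=
  Perm.viaFintypeEmbedding_apply_notMem_range _ _ (by simpa using hp)

theorem sign_cycleRotation [Fintype α] : Perm.sign (cycleRotation c hc) = 1 := by
  rw [cycleRotation, Perm.viaFintypeEmbedding_sign, sign_finRotate]
  exact Even.neg_one_pow ⟨m + 1, by omega⟩

end Rotation

end OddCycle

section CycMat

open MvPolynomial

variable {n m : ℕ} {c : Fin (2 * m + 3) → Fin n} {F : Matrix (Fin n) (Fin n) ℝ}

open scoped Classical in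
theorem cycMat_apply (p q : Fin n) :
    cycMat n m c F p q = if h : CycleAdj c p q then X h.choose else C (F p q) := by
  -- not `rfl`: `cycMat` decides the existential through `Fintype`, not classically
  rw [cycMat, of_apply]
  exact dite_congr rfl (fun _ => rfl) fun _ => rfl

theorem cycMat_apply_of_not_cycleAdj {p q : Fin n} (h : ¬ CycleAdj c p q) :
    cycMat n m c F p q = C (F p q) := by
  rw [cycMat_apply, dif_neg h]

theorem cycMat_apply_edge (hc : Function.Injective c) (i : Fin (2 * m + 3)) :
    cycMat n m c F (c i) (c (i + 1)) = X i := by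
  have h : CycleAdj c (c i) (c (i + 1)) := ⟨i, Or.inl ⟨rfl, rfl⟩⟩
  rw [cycMat_apply, dif_pos h]
  exact congrArg X (eq_of_cycle_edge hc h.choose_spec).symm

theorem cycMat_apply_edge_symm (hc : Function.Injective c) (i : Fin (2 * m + 3)) :
    cycMat n m c F (c (i + 1)) (c i) = X i := by
  have h : CycleAdj c (c (i + 1)) (c i) := ⟨i, Or.inr ⟨rfl, rfl⟩⟩
  rw [cycMat_apply, dif_pos h]
  exact congrArg X (eq_of_cycle_edge hc (h.choose_spec.symm.imp And.symm And.symm)).symm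

open scoped Classical in
theorem totalDegree_cycMat_apply_le (p q : Fin n) :
    (cycMat n m c F p q).totalDegree ≤ if CycleAdj c p q then 1 else 0 := by
  by_cases h : CycleAdj c p q
  · rw [cycMat_apply, dif_pos h, if_pos h, totalDegree_X]
  · rw [cycMat_apply_of_not_cycleAdj h, if_neg h, totalDegree_C]

open scoped Classical in
theorem totalDegree_prod_cycMat_le_card (σ : Perm (Fin n)) :
    (∏ p, cycMat n m c F (σ p) p).totalDegree ≤ #{p | CycleAdj c (σ p) p} := by
  refine (totalDegree_finsetProd _ _).trans ?_
  refine (sum_le_sum fun p _ => totalDegree_cycMat_apply_le (σ p) p).trans ?_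
  rw [sum_boole, Nat.cast_id]

theorem totalDegree_prod_cycMat_le (σ : Perm (Fin n)) :
    (∏ p, cycMat n m c F (σ p) p).totalDegree ≤ 2 * m + 3 := by
  classical
  calc _ ≤ #{p | CycleAdj c (σ p) p} := totalDegree_prod_cycMat_le_card σ
    _ ≤ #(univ.image c) := card_le_card fun p hp => (mem_filter.mp hp).2.right_mem_image
    _ ≤ 2 * m + 3 := card_image_le.trans (by simp)

theorem totalDegree_prod_cycMat_lt (hc : Function.Injective c) {σ : Perm (Fin n)}
    {j : Fin (2 * m + 3)} (hj : ¬ CycleAdj c (σ (c j)) (c j)) :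
    (∏ p, cycMat n m c F (σ p) p).totalDegree < 2 * m + 3 := by
  classical
  calc _ ≤ #{p | CycleAdj c (σ p) p} := totalDegree_prod_cycMat_le_card σ
    _ < #(univ.image c) := card_lt_card <|
        (ssubset_iff_of_subset fun p hp => (mem_filter.mp hp).2.right_mem_image).mpr
          ⟨c j, mem_image_of_mem c (mem_univ j), fun h => hj (mem_filter.mp h).2⟩
    _ = 2 * m + 3 := by rw [card_image_of_injective _ hc, card_univ, Fintype.card_fin]

theorem prod_cycMat_eq_C_mul_prod_cycle (hc : Function.Injective c) (σ : Perm (Fin n)) :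
    ∏ p, cycMat n m c F (σ p) p =
      C (∏ p ∈ (univ.image c)ᶜ, F (σ p) p) * ∏ j, cycMat n m c F (σ (c j)) (c j) := by
  rw [← prod_compl_mul_prod (univ.image c), prod_image fun _ _ _ _ h => hc h, map_prod]
  congr 1
  exact prod_congr rfl fun p hp =>
    cycMat_apply_of_not_cycleAdj fun h => mem_compl.mp hp h.right_mem_image

theorem prod_cycMat_of_forall_eq_add_one (hc : Function.Injective c) {σ : Perm (Fin n)}
    (hσ : ∀ j, σ (c j) = c (j + 1)) :
    ∏ p, cycMat n m c F (σ p) p = C (∏ p ∈ (univ.image c)ᶜ, F (σ p) p) * ∏ j, X j := by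
  simp only [prod_cycMat_eq_C_mul_prod_cycle hc, hσ, cycMat_apply_edge_symm hc]

theorem prod_cycMat_of_forall_eq_sub_one (hc : Function.Injective c) {σ : Perm (Fin n)}
    (hσ : ∀ j, σ (c j) = c (j - 1)) :
    ∏ p, cycMat n m c F (σ p) p = C (∏ p ∈ (univ.image c)ᶜ, F (σ p) p) * ∏ j, X j := by
  rw [prod_cycMat_eq_C_mul_prod_cycle hc, ← Equiv.prod_comp (Equiv.addRight 1)]
  simp only [hσ, coe_addRight, add_sub_cancel_right, cycMat_apply_edge hc]

theorem isHomogeneous_C_mul_prod_X (r : ℝ) :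
    (C r * ∏ j, X j : MvPolynomial (Fin (2 * m + 3)) ℝ).IsHomogeneous (2 * m + 3) := by
  simpa using (isHomogeneous_C _ r).mul
    (IsHomogeneous.prod (univ : Finset (Fin (2 * m + 3))) (X (R := ℝ)) (fun _ => 1)
      fun j _ => isHomogeneous_X ℝ j)

theorem homogeneousComponent_prod_cycMat (hc : Function.Injective c) (σ : Perm (Fin n)) :
    homogeneousComponent (2 * m + 3) (∏ p, cycMat n m c F (σ p) p) =
      C ((if ∀ j, σ (c j) = c (j + 1) then ∏ p ∈ (univ.image c)ᶜ, F (σ p) p else 0) +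
        (if ∀ j, σ (c j) = c (j - 1) then ∏ p ∈ (univ.image c)ᶜ, F (σ p) p else 0)) *
        ∏ j, X j := by
  have not_both : ¬ ((∀ j, σ (c j) = c (j + 1)) ∧ ∀ j, σ (c j) = c (j - 1)) :=
    fun ⟨h₁, h₂⟩ => Fin.two_ne_zero_of_odd (m := m) <| by
      have := hc ((h₁ 0).symm.trans (h₂ 0))
      linear_combination this
  by_cases hf : ∀ j, σ (c j) = c (j + 1)
  · rw [if_pos hf, if_neg fun hb => not_both ⟨hf, hb⟩, add_zero,
      prod_cycMat_of_forall_eq_add_one hc hf,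
      homogeneousComponent_eq_self (isHomogeneous_C_mul_prod_X _)]
  by_cases hb : ∀ j, σ (c j) = c (j - 1)
  · rw [if_neg hf, if_pos hb, zero_add, prod_cycMat_of_forall_eq_sub_one hc hb,
      homogeneousComponent_eq_self (isHomogeneous_C_mul_prod_X _)]
  rw [if_neg hf, if_neg hb, add_zero, C_0, zero_mul]
  obtain ⟨j, hj⟩ : ∃ j, ¬ CycleAdj c (σ (c j)) (c j) := by
    by_contra! hadj
    exact (forall_eq_add_one_or_forall_eq_sub_one hc fun j =>
      (hadj j).eq_add_one_or_eq_sub_one hc).elim hf hb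
  exact homogeneousComponent_eq_zero _ _ (totalDegree_prod_cycMat_lt hc hj)

theorem homogeneousComponent_det_cycMat (hc : Function.Injective c) :
    homogeneousComponent (2 * m + 3) (cycMat n m c F).det =
      C (2 * (F.submatrix (Subtype.val : {p // p ∉ univ.image c} → Fin n) Subtype.val).det) *
        ∏ j, X j := by
  have forward : ∀ σ : Perm (Fin n),
      (∀ j, σ (c j) = c (j + 1)) ↔ ∀ p ∈ univ.image c, σ p = cycleRotation c hc p := by
    simp [cycleRotation_apply]
  have backward : ∀ σ : Perm (Fin n),
      (∀ j, σ (c j) = c (j - 1)) ↔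
        ∀ p ∈ univ.image c, σ p = (cycleRotation c hc).symm p := by
    simp [cycleRotation_symm_apply]
  rw [det_apply', map_sum]
  simp_rw [← map_intCast (C : ℝ →+* MvPolynomial (Fin (2 * m + 3)) ℝ),
    homogeneousComponent_C_mul, homogeneousComponent_prod_cycMat hc, ← mul_assoc, ← map_mul,
    ← sum_mul, ← map_sum, mul_add, mul_ite, mul_zero, sum_add_distrib, ← sum_filter, forward,
    backward]
  rw [sum_perm_eqOn_eq_sign_mul_det_submatrix _ _ fun p => cycleRotation_apply_of_notMem hc,
    sum_perm_eqOn_eq_sign_mul_det_submatrix _ _ fun p hp => by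
      rw [symm_apply_eq, cycleRotation_apply_of_notMem hc hp],
    Perm.sign_symm, sign_cycleRotation, Units.val_one, Int.cast_one, one_mul, ← two_mul]

theorem totalDegree_det_cycMat_le : (cycMat n m c F).det.totalDegree ≤ 2 * m + 3 := by
  rw [det_apply]
  exact totalDegree_finsetSum_le fun σ _ =>
    (totalDegree_smul_le _ _).trans (totalDegree_prod_cycMat_le σ)

theorem totalDegree_det_cycMat (hc : Function.Injective c)
    (hgen : (F.submatrix (Subtype.val : {p // p ∉ univ.image c} → Fin n)
      Subtype.val).det ≠ 0) :
    (cycMat n m c F).det.totalDegree = 2 * m + 3 := by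
  refine totalDegree_det_cycMat_le.antisymm (not_lt.mp fun hlt => ?_)
  have h := homogeneousComponent_eq_zero _ _ hlt
  rw [homogeneousComponent_det_cycMat hc] at h
  exact mul_ne_zero (C_ne_zero.mpr (mul_ne_zero two_ne_zero hgen))
    (prod_ne_zero_iff.mpr fun j _ => X_ne_zero j) h

end CycMat

theorem det_odd_cycle_pattern_general (n m : ℕ) (c : Fin (2 * m + 3) → Fin n)
    (hc : Function.Injective c) (F : Matrix (Fin n) (Fin n) ℝ)
    (hgen : (F.submatrix
        (Subtype.val : {p : Fin n // p ∉ Finset.univ.image c} → Fin n)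
        Subtype.val).det ≠ 0) :
    Odd (cycMat n m c F).det.totalDegree ∧
      ∃ x : Fin (2 * m + 3) → ℝ,
        ((cycMat n m c F).map (MvPolynomial.eval x)).det = 0 := by
  have hodd : Odd (cycMat n m c F).det.totalDegree := by
    rw [totalDegree_det_cycMat hc hgen]
    exact ⟨m + 1, by ring⟩
  obtain ⟨x, hx⟩ := MvPolynomial.exists_eval_eq_zero_of_odd_totalDegree hodd
  exact ⟨hodd, x, (RingHom.map_det _ _).symm.trans hx⟩

/-- For a symmetric matrix whose unknown entries form the edge set of an odd
cycle (all other entries generic fixed reals, genericity being expressed by the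
nonvanishing of the complementary principal minor), the determinant is a
polynomial of odd total degree in the unknown entries; consequently some real
choice of the unknowns makes the matrix singular. -/
theorem det_odd_cycle_pattern (n m : ℕ) (c : Fin (2 * m + 3) → Fin n)
    (hc : Function.Injective c) (F : Matrix (Fin n) (Fin n) ℝ) (hF : F.IsSymm)
    (hgen : (F.submatrix
        (Subtype.val : {p : Fin n // p ∉ Finset.univ.image c} → Fin n)
        Subtype.val).det ≠ 0) :
    Odd (cycMat n m c F).det.totalDegree ∧
      ∃ x : Fin (2 * m + 3) → ℝ,
        ((cycMat n m c F).map (MvPolynomial.eval x)).det = 0 :=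
  det_odd_cycle_pattern_general n m c hc F hgen
end

section
/- Let A be an m×m invertible real symmetric matrix, B an n×n invertible real symmetric matrix. Then for every real m×n matrix X, the rank of [[A, X],[Xᵀ, B]] is at least max(m, n) + esd(A, B), where esd(A,B) is the eigenvalue sign disagreement: esd(A,B) = 0 if (p_A − p_B)(n_A − n_B) ≥ 0, and esd(A,B) = min(|p_A − p_B|, |n_A − n_B|) otherwise, with p_C and n_C the numbers of positive and negative eigenvalues of C. -/
/-!
The rank of a real symmetric matrix `M` is its number of nonzero eigenvalues, `p_M + n_M`. By
Sylvester's argument, `p_M` bounds the dimension of every subspace on which `x ↦ xᵀ M x` is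
positive definite; since `M = [[A, X], [Xᵀ, B]]` restricts to the forms of `A` and of `B` on the
two coordinate subspaces, `p_M ≥ max p_A p_B`, and likewise `n_M ≥ max n_A n_B`. As
`p_A + n_A = m` and `p_B + n_B = n` for invertible `A` and `B`, what remains is the arithmetic
inequality `max p_A p_B + max n_A n_B ≥ max m n + esd(A, B)`.
-/

open Matrix

/-- Number of positive eigenvalues (with multiplicity) of a real symmetric matrix. -/
noncomputable def posCount {n : ℕ} {A : Matrix (Fin n) (Fin n) ℝ}
    (hA : A.IsHermitian) : ℕ :=
  (Finset.univ.filter fun i => 0 < hA.eigenvalues i).card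

/-- Number of negative eigenvalues (with multiplicity) of a real symmetric matrix. -/
noncomputable def negCount {n : ℕ} {A : Matrix (Fin n) (Fin n) ℝ}
    (hA : A.IsHermitian) : ℕ :=
  (Finset.univ.filter fun i => hA.eigenvalues i < 0).card

/-- The eigenvalue sign disagreement `esd(A, B)`. -/
noncomputable def esd {m n : ℕ} {A : Matrix (Fin m) (Fin m) ℝ}
    {B : Matrix (Fin n) (Fin n) ℝ} (hA : A.IsHermitian) (hB : B.IsHermitian) : ℕ :=
  if 0 ≤ ((posCount hA : ℤ) - (posCount hB : ℤ)) * ((negCount hA : ℤ) - (negCount hB : ℤ))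
  then 0
  else min ((posCount hA : ℤ) - (posCount hB : ℤ)).natAbs
    ((negCount hA : ℤ) - (negCount hB : ℤ)).natAbs

open Finset QuadraticMap

variable {ι κ : Type*} [Fintype ι] [Fintype κ]

namespace QuadraticMap

lemma finrank_le_card_pos_of_posDef_weightedSumSquares_comp {E : Type*} [AddCommGroup E]
    [Module ℝ E] {w : ι → ℝ} (L : E →ₗ[ℝ] ι → ℝ) (hL : ((weightedSumSquares ℝ w).comp L).PosDef) :
    Module.finrank ℝ E ≤ #{i | 0 < w i} := by
  let restrict : E →ₗ[ℝ] {i // 0 < w i} → ℝ := LinearMap.funLeft ℝ ℝ Subtype.val ∘ₗ L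
  have h_inj : Function.Injective restrict := by
    refine (injective_iff_map_eq_zero restrict).2 fun x hx => ?_
    by_contra hx0
    have hnonpos : weightedSumSquares ℝ w (L x) ≤ 0 := by
      rw [weightedSumSquares_apply]
      refine Finset.sum_nonpos fun i _ => ?_
      by_cases hi : 0 < w i
      · simp [show L x i = 0 from congrFun hx ⟨i, hi⟩]
      · exact mul_nonpos_of_nonpos_of_nonneg (not_lt.1 hi) (mul_self_nonneg _)
    exact hnonpos.not_gt (hL x hx0)
  simpa [Fintype.card_subtype] using LinearMap.finrank_le_finrank_of_injective h_inj

lemma posDef_weightedSumSquares_comp_extendByZero (w : ι → ℝ) :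
    ((weightedSumSquares ℝ w).comp
      (Function.ExtendByZero.linearMap ℝ (Subtype.val : {i // 0 < w i} → ι))).PosDef := by
  intro c hc
  obtain ⟨j, hj⟩ := Function.ne_iff.1 hc
  simp only [QuadraticMap.comp_apply, Function.ExtendByZero.linearMap_apply,
    weightedSumSquares_apply, smul_eq_mul]
  refine Finset.sum_pos' (fun i _ => ?_) ⟨j, mem_univ _, ?_⟩
  · by_cases hi : 0 < w i
    · exact mul_nonneg hi.le (mul_self_nonneg _)
    · rw [Function.extend_apply' _ _ _ fun ⟨k, hk⟩ => hi (hk ▸ k.2)]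
      simp
  · rw [Subtype.val_injective.extend_apply]
    exact mul_pos j.2 (mul_self_pos.2 hj)

lemma card_pos_le_card_pos_of_weightedSumSquares_comp {w : ι → ℝ} {v : κ → ℝ}
    (f : (ι → ℝ) →ₗ[ℝ] κ → ℝ) (hf : ∀ x, weightedSumSquares ℝ v (f x) = weightedSumSquares ℝ w x) :
    #{i | 0 < w i} ≤ #{i | 0 < v i} := by
  have h := finrank_le_card_pos_of_posDef_weightedSumSquares_comp (w := v)
    (f ∘ₗ Function.ExtendByZero.linearMap ℝ (Subtype.val : {i // 0 < w i} → ι))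
    fun c hc => (hf _).symm ▸ posDef_weightedSumSquares_comp_extendByZero w c hc
  simpa [Fintype.card_subtype] using h

lemma weightedSumSquares_neg (w : ι → ℝ) (x : ι → ℝ) :
    weightedSumSquares ℝ (-w) x = -weightedSumSquares ℝ w x := by
  simp [Finset.sum_neg_distrib]

end QuadraticMap

namespace Matrix.IsHermitian

variable [DecidableEq ι] [DecidableEq κ] {M : Matrix ι ι ℝ} {N : Matrix κ κ ℝ}

lemma dotProduct_mulVec_eq_weightedSumSquares (hM : M.IsHermitian) (x : ι → ℝ) :
    x ⬝ᵥ M *ᵥ x =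
      weightedSumSquares ℝ hM.eigenvalues (star (hM.eigenvectorUnitary : Matrix ι ι ℝ) *ᵥ x) := by
  conv_lhs => rw [hM.spectral_theorem, Unitary.conjStarAlgAut_apply]
  rw [← mulVec_mulVec, ← mulVec_mulVec, dotProduct_mulVec, star_eq_conjTranspose,
    conjTranspose_eq_transpose_of_trivial, ← mulVec_transpose]
  simp [dotProduct, mulVec_diagonal, weightedSumSquares_apply, mul_left_comm]

lemma exists_weightedSumSquares_eigenvalues_comp (hM : M.IsHermitian) (hN : N.IsHermitian)
    (f : (ι → ℝ) →ₗ[ℝ] κ → ℝ) (hf : ∀ x, f x ⬝ᵥ N *ᵥ f x = x ⬝ᵥ M *ᵥ x) :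
    ∃ g : (ι → ℝ) →ₗ[ℝ] κ → ℝ, ∀ y,
      weightedSumSquares ℝ hN.eigenvalues (g y) = weightedSumSquares ℝ hM.eigenvalues y := by
  set U : Matrix ι ι ℝ := (hM.eigenvectorUnitary : Matrix ι ι ℝ)
  refine ⟨mulVecLin (star (hN.eigenvectorUnitary : Matrix κ κ ℝ)) ∘ₗ f ∘ₗ mulVecLin U, fun y => ?_⟩
  have hy : star U *ᵥ (U *ᵥ y) = y := by
    rw [mulVec_mulVec, Unitary.coe_star_mul_self, one_mulVec]
  simp only [LinearMap.comp_apply, mulVecLin_apply]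
  rw [← hN.dotProduct_mulVec_eq_weightedSumSquares, hf,
    hM.dotProduct_mulVec_eq_weightedSumSquares, hy]

lemma card_pos_eigenvalues_le (hM : M.IsHermitian) (hN : N.IsHermitian)
    (f : (ι → ℝ) →ₗ[ℝ] κ → ℝ) (hf : ∀ x, f x ⬝ᵥ N *ᵥ f x = x ⬝ᵥ M *ᵥ x) :
    #{i | 0 < hM.eigenvalues i} ≤ #{i | 0 < hN.eigenvalues i} := by
  obtain ⟨g, hg⟩ := exists_weightedSumSquares_eigenvalues_comp hM hN f hf
  exact card_pos_le_card_pos_of_weightedSumSquares_comp g hg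

lemma card_neg_eigenvalues_le (hM : M.IsHermitian) (hN : N.IsHermitian)
    (f : (ι → ℝ) →ₗ[ℝ] κ → ℝ) (hf : ∀ x, f x ⬝ᵥ N *ᵥ f x = x ⬝ᵥ M *ᵥ x) :
    #{i | hM.eigenvalues i < 0} ≤ #{i | hN.eigenvalues i < 0} := by
  obtain ⟨g, hg⟩ := exists_weightedSumSquares_eigenvalues_comp hM hN f hf
  simpa only [Pi.neg_apply, neg_pos] using card_pos_le_card_pos_of_weightedSumSquares_comp
    (w := -hM.eigenvalues) (v := -hN.eigenvalues) g fun y => by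
      rw [weightedSumSquares_neg, weightedSumSquares_neg, hg]

lemma card_pos_add_card_neg_eigenvalues (hM : M.IsHermitian) :
    #{i | 0 < hM.eigenvalues i} + #{i | hM.eigenvalues i < 0} = M.rank := by
  rw [hM.rank_eq_card_non_zero_eigs, Fintype.card_subtype, add_comm, ← card_union_of_disjoint]
  · simp only [ne_iff_lt_or_gt, filter_or]
  · exact disjoint_filter.2 fun i _ h => h.not_gt

end Matrix.IsHermitian

namespace Matrix

variable {l m R : Type*} [Fintype l] [Fintype m] [NonUnitalNonAssocSemiring R]

lemma sumElim_zero_dotProduct_fromBlocks_mulVec (A : Matrix l l R) (B : Matrix l m R)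
    (C : Matrix m l R) (D : Matrix m m R) (x : l → R) :
    Sum.elim x 0 ⬝ᵥ fromBlocks A B C D *ᵥ Sum.elim x 0 = x ⬝ᵥ A *ᵥ x := by
  simp [fromBlocks_mulVec, sumElim_dotProduct_sumElim]

lemma zero_sumElim_dotProduct_fromBlocks_mulVec (A : Matrix l l R) (B : Matrix l m R)
    (C : Matrix m l R) (D : Matrix m m R) (y : m → R) :
    Sum.elim 0 y ⬝ᵥ fromBlocks A B C D *ᵥ Sum.elim 0 y = y ⬝ᵥ D *ᵥ y := by
  simp [fromBlocks_mulVec, sumElim_dotProduct_sumElim]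

end Matrix

lemma posCount_add_negCount_of_isUnit {n : ℕ} {A : Matrix (Fin n) (Fin n) ℝ} (hA : A.IsHermitian)
    (hAu : IsUnit A) : posCount hA + negCount hA = n := by
  rw [posCount, negCount, hA.card_pos_add_card_neg_eigenvalues, rank_of_isUnit A hAu,
    Fintype.card_fin]

lemma max_add_esd_le_max_add_max {m n : ℕ} {A : Matrix (Fin m) (Fin m) ℝ}
    {B : Matrix (Fin n) (Fin n) ℝ} (hA : A.IsHermitian) (hB : B.IsHermitian) (hAu : IsUnit A)
    (hBu : IsUnit B) :
    max m n + esd hA hB ≤ max (posCount hA) (posCount hB) + max (negCount hA) (negCount hB) := by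
  have hm := posCount_add_negCount_of_isUnit hA hAu
  have hn := posCount_add_negCount_of_isUnit hB hBu
  unfold esd
  split_ifs with h
  · omega
  · rcases mul_neg_iff.1 (not_le.1 h) with ⟨_, _⟩ | ⟨_, _⟩ <;> omega

/-- Every completion `[[A, X], [Xᵀ, B]]` of the pattern of two disjoint cliques
has rank at least `max m n + esd(A, B)`. -/
theorem rank_block_ge_max_add_esd (m n : ℕ)
    (A : Matrix (Fin m) (Fin m) ℝ) (B : Matrix (Fin n) (Fin n) ℝ)
    (hA : A.IsHermitian) (hB : B.IsHermitian)
    (hAu : IsUnit A) (hBu : IsUnit B) :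
    ∀ X : Matrix (Fin m) (Fin n) ℝ,
      max m n + esd hA hB ≤ (Matrix.fromBlocks A X Xᵀ B).rank := by
  intro X
  have hM : (fromBlocks A X Xᵀ B).IsHermitian := hA.fromBlocks (by simp) hB
  have hA_block := sumElim_zero_dotProduct_fromBlocks_mulVec A X Xᵀ B
  have hB_block := zero_sumElim_dotProduct_fromBlocks_mulVec A X Xᵀ B
  have hpA := hA.card_pos_eigenvalues_le hM Sum.elimZeroRight hA_block
  have hpB := hB.card_pos_eigenvalues_le hM Sum.elimZeroLeft hB_block
  have hnA := hA.card_neg_eigenvalues_le hM Sum.elimZeroRight hA_block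
  have hnB := hB.card_neg_eigenvalues_le hM Sum.elimZeroLeft hB_block
  calc max m n + esd hA hB
      ≤ max (posCount hA) (posCount hB) + max (negCount hA) (negCount hB) :=
        max_add_esd_le_max_add_max hA hB hAu hBu
    _ ≤ #{i | 0 < hM.eigenvalues i} + #{i | hM.eigenvalues i < 0} :=
        add_le_add (max_le hpA hpB) (max_le hnA hnB)
    _ = (fromBlocks A X Xᵀ B).rank := hM.card_pos_add_card_neg_eigenvalues
end

section
/- Let A be an m×m invertible real symmetric matrix and B an n×n invertible real symmetric matrix. Then there exists a real m×n matrix X such that the block matrix [[A, X],[Xᵀ, B]] has rank exactly max(m, n) + esd(A, B). -/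
open Matrix

/-!
By Sylvester's law of inertia `A = P D_A Pᵀ` and `B = Q D_B Qᵀ` with `P`, `Q` invertible and
`D_A`, `D_B` diagonal with entries `±1`; congruence by `diag(P, Q)` preserves rank, so `A` and `B`
may be taken to be such sign matrices. Pair off `min(p_A, p_B)` of the `+1` entries of `B` with
`+1` entries of `A`, and `min(n_A, n_B)` of its `-1` entries with `-1` entries of `A`, and let `F`
be the 0/1 matrix of this matching. For `X = A Fᵀ`, block elimination gives
`rank = rank A + rank (B - F A Fᵀ)`, and `F A Fᵀ` is the restriction of `B` to the matched indices,
so the rank is `m + n - min(p_A, p_B) - min(n_A, n_B) = max(m, n) + esd(A, B)`.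
-/

namespace Matrix

section Congruence

variable {R ι κ : Type*} [CommRing R] [Fintype ι] [Fintype κ] [DecidableEq ι] [DecidableEq κ]

theorem rank_mul_mul_transpose_of_isUnit_det (P M : Matrix ι ι R) (hP : IsUnit P.det) :
    (P * M * Pᵀ).rank = M.rank := by
  rw [rank_mul_eq_left_of_isUnit_det _ _ (by rwa [det_transpose]),
    rank_mul_eq_right_of_isUnit_det _ _ hP]

theorem rank_fromBlocks_of_congr {P A A₀ : Matrix ι ι R} {Q B B₀ : Matrix κ κ R}
    (hP : IsUnit P.det) (hQ : IsUnit Q.det) (hA : A = P * A₀ * Pᵀ) (hB : B = Q * B₀ * Qᵀ)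
    (X : Matrix ι κ R) :
    (fromBlocks A (P * X * Qᵀ) (P * X * Qᵀ)ᵀ B).rank = (fromBlocks A₀ X Xᵀ B₀).rank := by
  have hconj : fromBlocks A (P * X * Qᵀ) (P * X * Qᵀ)ᵀ B
      = fromBlocks P 0 0 Q * fromBlocks A₀ X Xᵀ B₀ * (fromBlocks P 0 0 Q)ᵀ := by
    simp [fromBlocks_transpose, fromBlocks_multiply, hA, hB, transpose_mul, Matrix.mul_assoc]
  rw [hconj, rank_mul_mul_transpose_of_isUnit_det _ _
    (by simpa [det_fromBlocks_zero₁₂] using hP.mul hQ)]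

theorem rank_fromBlocks_mul_transpose (A : Matrix ι ι R) (hA : Aᵀ = A) (F : Matrix κ ι R)
    (B : Matrix κ κ R) :
    (fromBlocks A (A * Fᵀ) (A * Fᵀ)ᵀ B).rank = (fromBlocks A 0 0 (B - F * A * Fᵀ)).rank := by
  have hconj : fromBlocks A (A * Fᵀ) (A * Fᵀ)ᵀ B
      = fromBlocks 1 0 F 1 * fromBlocks A 0 0 (B - F * A * Fᵀ) * (fromBlocks 1 0 F 1)ᵀ := by
    simp [fromBlocks_transpose, fromBlocks_multiply, transpose_mul, hA, Matrix.mul_assoc]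
  rw [hconj, rank_mul_mul_transpose_of_isUnit_det _ _ (by simp)]

end Congruence

section Matching

variable {ι κ μ : Type*} [Fintype μ] [DecidableEq ι] [DecidableEq κ]

def matchingMatrix (K : Type*) [Zero K] [One K] (u : μ ↪ κ) (v : μ ↪ ι) : Matrix κ ι K :=
  of fun j i => if ∃ r, u r = j ∧ v r = i then 1 else 0

variable {K : Type*} (u : μ ↪ κ) (v : μ ↪ ι)

theorem matchingMatrix_apply_embedding [Zero K] [One K] (r : μ) (i : ι) :
    matchingMatrix K u v (u r) i = if v r = i then 1 else 0 := by
  simp [matchingMatrix, u.injective.eq_iff]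

theorem matchingMatrix_apply_embedding_right [Zero K] [One K] (j : κ) (r : μ) :
    matchingMatrix K u v j (v r) = if u r = j then 1 else 0 := by
  simp [matchingMatrix, v.injective.eq_iff, eq_comm]

theorem matchingMatrix_apply_of_notMem_range [Zero K] [One K] {j : κ} (hj : j ∉ Set.range u)
    (i : ι) : matchingMatrix K u v j i = 0 := by
  simp only [Set.mem_range, not_exists] at hj
  simp [matchingMatrix, hj]

theorem matchingMatrix_mul_diagonal_mul_transpose [NonAssocSemiring K] [Fintype ι]
    {s : ι → K} {t : κ → K} (hst : ∀ r, s (v r) = t (u r)) :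
    matchingMatrix K u v * diagonal s * (matchingMatrix K u v)ᵀ
      = diagonal ((Set.range u).indicator t) := by
  ext j j'
  simp only [mul_apply, transpose_apply]
  by_cases hj : j ∈ Set.range u
  · obtain ⟨r, rfl⟩ := hj
    simp [matchingMatrix_apply_embedding, matchingMatrix_apply_embedding_right, hst,
      diagonal_apply, eq_comm]
  · simp [matchingMatrix_apply_of_notMem_range u v hj, diagonal_apply, hj]

theorem rank_fromBlocks_diagonal_matchingMatrix [Field K] [Fintype ι] [Fintype κ]
    {s : ι → K} {t : κ → K} (hs : ∀ i, s i ≠ 0) (ht : ∀ j, t j ≠ 0)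
    (hst : ∀ r, s (v r) = t (u r)) :
    (fromBlocks (diagonal s) (diagonal s * (matchingMatrix K u v)ᵀ)
      (diagonal s * (matchingMatrix K u v)ᵀ)ᵀ (diagonal t)).rank
      = Fintype.card ι + (Fintype.card κ - Fintype.card μ) := by
  classical
  have hcompl : diagonal t - diagonal ((Set.range u).indicator t)
      = diagonal ((Set.range u)ᶜ.indicator t) := by
    rw [Set.indicator_compl, diagonal_sub]; rfl
  rw [rank_fromBlocks_mul_transpose _ (diagonal_transpose s),
    matchingMatrix_mul_diagonal_mul_transpose u v hst, hcompl, fromBlocks_diagonal, rank_diagonal,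
    Fintype.card_congr Equiv.subtypeSum, Fintype.card_sum]
  congr 1
  · exact Fintype.card_congr (Equiv.subtypeUnivEquiv hs)
  · rw [← Set.card_range_of_injective u.injective, ← Fintype.card_subtype_compl]
    exact Fintype.card_congr (Equiv.subtypeEquivRight fun j => by simp [ht j])

end Matching

end Matrix

section FiberwiseMatching

open Finset

theorem exists_fiberwise_matching {ι κ C : Type*} [Fintype ι] [Fintype κ] [Fintype C]
    [DecidableEq C] (c : ι → C) (d : κ → C) :
    ∃ (u : (Σ x, Fin (min #{i | c i = x} #{j | d j = x})) ↪ κ)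
      (v : (Σ x, Fin (min #{i | c i = x} #{j | d j = x})) ↪ ι),
      ∀ r, c (v r) = r.1 ∧ d (u r) = r.1 := by
  have hu : ∀ x, Nonempty (Fin (min #{i | c i = x} #{j | d j = x}) ↪ {j // d j = x}) :=
    fun x => Function.Embedding.nonempty_of_card_le (by simp [Fintype.card_subtype])
  have hv : ∀ x, Nonempty (Fin (min #{i | c i = x} #{j | d j = x}) ↪ {i // c i = x}) :=
    fun x => Function.Embedding.nonempty_of_card_le (by simp [Fintype.card_subtype])
  exact ⟨((Function.Embedding.refl C).sigmaMap fun x => (hu x).some).trans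
      (Equiv.sigmaFiberEquiv d).toEmbedding,
    ((Function.Embedding.refl C).sigmaMap fun x => (hv x).some).trans
      (Equiv.sigmaFiberEquiv c).toEmbedding,
    fun ⟨x, k⟩ => ⟨((hv x).some k).2, ((hu x).some k).2⟩⟩

end FiberwiseMatching

theorem coe_sign_ne_zero {α : Type*} [Ring α] [LinearOrder α] [IsStrictOrderedRing α] {x : α}
    (hx : x ≠ 0) : (SignType.sign x : α) ≠ 0 :=
  fun h => hx (by rw [← sign_mul_abs x, h, zero_mul])

namespace Matrix.IsHermitian

variable {ι : Type*} [Fintype ι] [DecidableEq ι] {A : Matrix ι ι ℝ} (hA : A.IsHermitian)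

theorem eigenvalues_ne_zero_of_isUnit (hAu : IsUnit A) (i : ι) : hA.eigenvalues i ≠ 0 := by
  have hdet : A.det ≠ 0 := ((isUnit_iff_isUnit_det A).mp hAu).ne_zero
  rw [hA.det_eq_prod_eigenvalues] at hdet
  exact_mod_cast (Finset.prod_ne_zero_iff.mp hdet) i (Finset.mem_univ i)

/-- Sylvester's normal form: rescale the orthonormal eigenbasis by `√|λᵢ|`. -/
theorem exists_eq_mul_diagonal_sign_mul_transpose (h0 : ∀ i, hA.eigenvalues i ≠ 0) :
    ∃ P : Matrix ι ι ℝ, IsUnit P.det ∧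
      A = P * diagonal (fun i => (SignType.sign (hA.eigenvalues i) : ℝ)) * Pᵀ := by
  have hU : IsUnit (hA.eigenvectorUnitary : Matrix ι ι ℝ).det :=
    isUnit_det_of_left_inverse (Unitary.star_mul_self_of_mem hA.eigenvectorUnitary.2)
  refine ⟨hA.eigenvectorUnitary * diagonal fun i => √|hA.eigenvalues i|, ?_, ?_⟩
  · rw [det_mul, det_diagonal]
    exact hU.mul (IsUnit.mk0 _ (Finset.prod_ne_zero_iff.mpr fun i _ =>
      Real.sqrt_ne_zero'.mpr (abs_pos.mpr (h0 i))))
  · have hdiag : (diagonal fun i => √|hA.eigenvalues i|)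
        * diagonal (fun i => (SignType.sign (hA.eigenvalues i) : ℝ))
        * diagonal (fun i => √|hA.eigenvalues i|) = diagonal hA.eigenvalues := by
      rw [diagonal_mul_diagonal, diagonal_mul_diagonal]
      congr 1
      ext i
      rw [mul_right_comm, Real.mul_self_sqrt (abs_nonneg _), mul_comm, sign_mul_abs]
    conv_lhs => rw [hA.spectral_theorem]
    rw [Unitary.conjStarAlgAut_apply, star_eq_conjTranspose, conjTranspose_eq_transpose_of_trivial,
      RCLike.ofReal_real_eq_id, Function.id_comp, ← hdiag, transpose_mul, diagonal_transpose]
    simp only [Matrix.mul_assoc]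

end Matrix.IsHermitian

section Inertia

open Finset

variable {n : ℕ} {A : Matrix (Fin n) (Fin n) ℝ} (hA : A.IsHermitian)

theorem posCount_add_negCount (h0 : ∀ i, hA.eigenvalues i ≠ 0) :
    posCount hA + negCount hA = n := by
  have hneg : negCount hA = #{i | ¬ 0 < hA.eigenvalues i} :=
    congrArg card <| filter_congr fun i _ =>
      ⟨fun h => h.not_gt, fun h => (not_lt.mp h).lt_of_ne (h0 i)⟩
  rw [posCount, hneg, card_filter_add_card_filter_not, card_univ, Fintype.card_fin]

theorem sum_min_card_sign_eigenvalues_eq {m : ℕ} {B : Matrix (Fin m) (Fin m) ℝ}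
    (hB : B.IsHermitian) (hA0 : ∀ i, hA.eigenvalues i ≠ 0) (hB0 : ∀ j, hB.eigenvalues j ≠ 0) :
    ∑ x : SignType, min #{i | SignType.sign (hA.eigenvalues i) = x}
        #{j | SignType.sign (hB.eigenvalues j) = x}
      = min (posCount hA) (posCount hB) + min (negCount hA) (negCount hB) := by
  simp [SignType.univ_eq, hA0, hB0, posCount, negCount, sign_eq_one_iff, sign_eq_neg_one_iff,
    add_comm]

end Inertia

theorem max_add_esd {m n : ℕ} {A : Matrix (Fin m) (Fin m) ℝ} {B : Matrix (Fin n) (Fin n) ℝ}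
    (hA : A.IsHermitian) (hB : B.IsHermitian) (hm : posCount hA + negCount hA = m)
    (hn : posCount hB + negCount hB = n) :
    max m n + esd hA hB
      = m + n - (min (posCount hA) (posCount hB) + min (negCount hA) (negCount hB)) := by
  unfold esd
  split_ifs with h <;> rw [mul_nonneg_iff] at h <;> omega

/-- Some completion `[[A, X], [Xᵀ, B]]` of the pattern of two disjoint cliques
has rank exactly `max m n + esd(A, B)`. -/
theorem exists_block_rank_eq_max_add_esd (m n : ℕ)
    (A : Matrix (Fin m) (Fin m) ℝ) (B : Matrix (Fin n) (Fin n) ℝ)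
    (hA : A.IsHermitian) (hB : B.IsHermitian)
    (hAu : IsUnit A) (hBu : IsUnit B) :
    ∃ X : Matrix (Fin m) (Fin n) ℝ,
      (Matrix.fromBlocks A X Xᵀ B).rank = max m n + esd hA hB := by
  have hA0 := hA.eigenvalues_ne_zero_of_isUnit hAu
  have hB0 := hB.eigenvalues_ne_zero_of_isUnit hBu
  have hm := posCount_add_negCount hA hA0
  have hn := posCount_add_negCount hB hB0
  obtain ⟨P, hP, hAP⟩ := hA.exists_eq_mul_diagonal_sign_mul_transpose hA0
  obtain ⟨Q, hQ, hBQ⟩ := hB.exists_eq_mul_diagonal_sign_mul_transpose hB0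
  obtain ⟨u, v, huv⟩ := exists_fiberwise_matching
    (fun i => SignType.sign (hA.eigenvalues i)) (fun j => SignType.sign (hB.eigenvalues j))
  refine ⟨P * (diagonal (fun i => (SignType.sign (hA.eigenvalues i) : ℝ))
    * (matchingMatrix ℝ u v)ᵀ) * Qᵀ, ?_⟩
  rw [rank_fromBlocks_of_congr hP hQ hAP hBQ,
    rank_fromBlocks_diagonal_matchingMatrix u v (fun i => coe_sign_ne_zero (hA0 i))
      (fun j => coe_sign_ne_zero (hB0 j)) (fun r => by rw [(huv r).1, (huv r).2]),
    Fintype.card_sigma]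
  simp only [Fintype.card_fin]
  rw [sum_min_card_sign_eigenvalues_eq hA hB hA0 hB0, max_add_esd hA hB hm hn]
  omega
end
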